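/- Let ψ and χ be copyable elements of a commutative †-Frobenius monoid (H, m, u) such that the three inner products ⟨ψ,ψ⟩, ⟨χ,χ⟩ and ⟨ψ,χ⟩ are all nonzero. Then ⟨ψ,ψ⟩ = ⟨ψ,χ⟩ = ⟨χ,ψ⟩ = ⟨χ,χ⟩, and this common value is real. -/

import Mathlib

noncomputable section

open scoped TensorProduct ComplexConjugate InnerProductSpace

open scoped TensorProduct ComplexConjugate InnerProductSpace

variable {H : Type*} [NormedAddCommGroup H] [InnerProductSpace ℂ H] [FiniteDimensional ℂ H]

namespace TensorIP

variable (H) in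
/-- A basis of `H ⊗ H` built from an orthonormal basis of `H`. -/
def tb : Module.Basis (Fin (Module.finrank ℂ H) × Fin (Module.finrank ℂ H)) ℂ (H ⊗[ℂ] H) :=
  Module.Basis.tensorProduct (stdOrthonormalBasis ℂ H).toBasis (stdOrthonormalBasis ℂ H).toBasis

variable (H) in
/-- The canonical inner product space structure on `H ⊗ H`, which is determined by
`⟪a ⊗ b, c ⊗ d⟫ = ⟪a,c⟫ * ⟪b,d⟫` (see `TensorIP.inner_tmul` below). -/
def core : InnerProductSpace.Core ℂ (H ⊗[ℂ] H) where
  inner x y := ∑ p, conj ((tb H).repr x p) * ((tb H).repr y p)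
  conj_inner_symm x y := by
    simp only [map_sum, map_mul, starRingEnd_self_apply]
    exact Finset.sum_congr rfl fun p _ => by ring
  re_inner_nonneg x := by
    show 0 ≤ RCLike.re (∑ p, conj ((tb H).repr x p) * ((tb H).repr x p))
    have h : ∀ p : Fin (Module.finrank ℂ H) × Fin (Module.finrank ℂ H),
        conj ((tb H).repr x p) * ((tb H).repr x p)
          = ((Complex.normSq ((tb H).repr x p) : ℝ) : ℂ) := fun p => by
      rw [mul_comm, Complex.mul_conj]
    simp only [h]
    rw [map_sum]
    refine Finset.sum_nonneg fun p _ => ?_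
    simp [Complex.normSq_nonneg]
  add_left x y z := by
    simp only [map_add, Finsupp.add_apply]
    rw [← Finset.sum_add_distrib]
    exact Finset.sum_congr rfl fun p _ => by ring
  smul_left x y r := by
    simp only [map_smul, Finsupp.smul_apply, smul_eq_mul, map_mul, Finset.mul_sum]
    exact Finset.sum_congr rfl fun p _ => by ring
  definite x hx := by
    have hx' : ∑ p, conj ((tb H).repr x p) * ((tb H).repr x p) = 0 := hx
    have h2 : ∑ p, ((Complex.normSq ((tb H).repr x p) : ℝ) : ℂ) = 0 := by
      rw [← hx']
      exact Finset.sum_congr rfl fun p _ => by rw [mul_comm, Complex.mul_conj]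
    have h3 : ∑ p, Complex.normSq ((tb H).repr x p) = 0 := by exact_mod_cast h2
    have h4 : ∀ p ∈ Finset.univ, Complex.normSq ((tb H).repr x p) = 0 :=
      (Finset.sum_eq_zero_iff_of_nonneg fun p _ => Complex.normSq_nonneg _).mp h3
    have h5 : (tb H).repr x = 0 := by
      ext p
      exact Complex.normSq_eq_zero.mp (h4 p (Finset.mem_univ p))
    simpa using (tb H).repr.map_eq_zero_iff.mp h5

instance : NormedAddCommGroup (H ⊗[ℂ] H) :=
  @InnerProductSpace.Core.toNormedAddCommGroup ℂ (H ⊗[ℂ] H) _ _ _ (core H)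

instance : InnerProductSpace ℂ (H ⊗[ℂ] H) := InnerProductSpace.ofCore (core H).toCore

attribute [-instance] TensorProduct.instInner

theorem inner_tmul (a b c d : H) :
    ⟪a ⊗ₜ[ℂ] b, c ⊗ₜ[ℂ] d⟫_ℂ = ⟪a, c⟫_ℂ * ⟪b, d⟫_ℂ := by
  have key : ∀ (x y : H) (p : Fin (Module.finrank ℂ H) × Fin (Module.finrank ℂ H)),
      (tb H).repr (x ⊗ₜ[ℂ] y) p
        = ⟪(stdOrthonormalBasis ℂ H) p.1, x⟫_ℂ * ⟪(stdOrthonormalBasis ℂ H) p.2, y⟫_ℂ := by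
    rintro x y ⟨i, j⟩
    rw [tb, Module.Basis.tensorProduct_repr_tmul_apply, smul_eq_mul,
      OrthonormalBasis.coe_toBasis_repr_apply, OrthonormalBasis.coe_toBasis_repr_apply,
      OrthonormalBasis.repr_apply_apply, OrthonormalBasis.repr_apply_apply, mul_comm]
  show (∑ p, conj ((tb H).repr (a ⊗ₜ[ℂ] b) p) * ((tb H).repr (c ⊗ₜ[ℂ] d) p)) = _
  simp only [key, map_mul]
  rw [← Finset.univ_product_univ, Finset.sum_product]
  have h : ∀ i j : Fin (Module.finrank ℂ H),
      (conj ⟪(stdOrthonormalBasis ℂ H) i, a⟫_ℂ * conj ⟪(stdOrthonormalBasis ℂ H) j, b⟫_ℂ) *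
        (⟪(stdOrthonormalBasis ℂ H) i, c⟫_ℂ * ⟪(stdOrthonormalBasis ℂ H) j, d⟫_ℂ)
      = (⟪a, (stdOrthonormalBasis ℂ H) i⟫_ℂ * ⟪(stdOrthonormalBasis ℂ H) i, c⟫_ℂ) *
        (⟪b, (stdOrthonormalBasis ℂ H) j⟫_ℂ * ⟪(stdOrthonormalBasis ℂ H) j, d⟫_ℂ) := by
    intro i j
    rw [inner_conj_symm, inner_conj_symm]; ring
  simp only [h]
  rw [← Finset.sum_mul_sum]
  rw [OrthonormalBasis.sum_inner_mul_inner, OrthonormalBasis.sum_inner_mul_inner]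

end TensorIP

/-- `(H, m, u)` is a commutative †-Frobenius monoid: `m` is associative and commutative,
`u 1` is a two-sided unit for `m`, and the Frobenius law
`(m ⊗ id) ∘ (id ⊗ δ) = δ ∘ m` holds, where `δ := m†`. -/
def IsFrobenius (m : H ⊗[ℂ] H →ₗ[ℂ] H) (u : ℂ →ₗ[ℂ] H) : Prop :=
  (m ∘ₗ TensorProduct.map m LinearMap.id
      = m ∘ₗ TensorProduct.map LinearMap.id m ∘ₗ (TensorProduct.assoc ℂ H H H).toLinearMap)
    ∧ (m ∘ₗ (TensorProduct.comm ℂ H H).toLinearMap = m)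
    ∧ (∀ x : H, m (u 1 ⊗ₜ[ℂ] x) = x)
    ∧ (∀ x : H, m (x ⊗ₜ[ℂ] u 1) = x)
    ∧ (TensorProduct.map m LinearMap.id ∘ₗ (TensorProduct.assoc ℂ H H H).symm.toLinearMap
        ∘ₗ TensorProduct.map LinearMap.id (LinearMap.adjoint (𝕜 := ℂ) m)
      = LinearMap.adjoint m ∘ₗ m)

/-- `ψ` is a copyable element: `δ ψ = ψ ⊗ ψ` and `ε ψ = 1`, where `δ := m†`, `ε := u†`. -/
def Copyable (m : H ⊗[ℂ] H →ₗ[ℂ] H) (u : ℂ →ₗ[ℂ] H) (ψ : H) : Prop :=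
  LinearMap.adjoint (𝕜 := ℂ) m ψ = ψ ⊗ₜ[ℂ] ψ ∧ LinearMap.adjoint u ψ = 1

/-! Copyable elements `ψ`, `χ` with `m (ψ ⊗ χ) ≠ 0` coincide: by the Frobenius law and
commutativity, `δ (m (ψ ⊗ χ))` equals both `m (ψ ⊗ χ) ⊗ χ` and `m (ψ ⊗ χ) ⊗ ψ`, and a nonzero
left factor can be cancelled. Nonvanishing follows from `⟪ψ, m (ψ ⊗ χ)⟫ = ⟪ψ, ψ⟫ ⟪ψ, χ⟫`. -/

namespace TensorIP

theorem tmul_left_cancel {s a b : H} (hs : s ≠ 0) (h : s ⊗ₜ[ℂ] a = s ⊗ₜ[ℂ] b) : a = b :=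
  ext_inner_left ℂ fun v =>
    mul_left_cancel₀ (inner_self_ne_zero.mpr hs) (by rw [← inner_tmul, ← inner_tmul, h])

end TensorIP

section Frobenius

variable {m : H ⊗[ℂ] H →ₗ[ℂ] H} {u : ℂ →ₗ[ℂ] H}

theorem Copyable.inner_mul_tmul {ψ : H} (hψ : Copyable m u ψ) (a b : H) :
    ⟪ψ, m (a ⊗ₜ[ℂ] b)⟫_ℂ = ⟪ψ, a⟫_ℂ * ⟪ψ, b⟫_ℂ := by
  rw [← LinearMap.adjoint_inner_left, hψ.1, TensorIP.inner_tmul]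

namespace IsFrobenius

theorem mul_tmul_comm (hfrob : IsFrobenius m u) (a b : H) :
    m (a ⊗ₜ[ℂ] b) = m (b ⊗ₜ[ℂ] a) := by
  simpa using (LinearMap.congr_fun hfrob.2.1 (a ⊗ₜ[ℂ] b)).symm

theorem adjoint_mul_tmul_of_copyable (hfrob : IsFrobenius m u) {χ : H}
    (hχ : Copyable m u χ) (a : H) :
    LinearMap.adjoint m (m (a ⊗ₜ[ℂ] χ)) = m (a ⊗ₜ[ℂ] χ) ⊗ₜ[ℂ] χ := by
  have h := LinearMap.congr_fun hfrob.2.2.2.2 (a ⊗ₜ[ℂ] χ)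
  simp only [LinearMap.comp_apply, TensorProduct.map_tmul, LinearMap.id_coe, id_eq,
    LinearEquiv.coe_coe, TensorProduct.assoc_symm_tmul, hχ.1] at h
  exact h.symm

theorem eq_of_copyable_of_mul_ne_zero (hfrob : IsFrobenius m u) {ψ χ : H}
    (hψ : Copyable m u ψ) (hχ : Copyable m u χ) (hne : m (ψ ⊗ₜ[ℂ] χ) ≠ 0) : ψ = χ := by
  refine TensorIP.tmul_left_cancel hne ?_
  calc m (ψ ⊗ₜ[ℂ] χ) ⊗ₜ[ℂ] ψ
      = LinearMap.adjoint m (m (χ ⊗ₜ[ℂ] ψ)) := by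
        rw [hfrob.adjoint_mul_tmul_of_copyable hψ, hfrob.mul_tmul_comm]
    _ = m (ψ ⊗ₜ[ℂ] χ) ⊗ₜ[ℂ] χ := by
        rw [hfrob.mul_tmul_comm, hfrob.adjoint_mul_tmul_of_copyable hχ]

end IsFrobenius

end Frobenius

theorem copyable_inner_eq_general (m : H ⊗[ℂ] H →ₗ[ℂ] H) (u : ℂ →ₗ[ℂ] H)
    (hfrob : IsFrobenius m u) (ψ χ : H) (hψ : Copyable m u ψ) (hχ : Copyable m u χ)
    (h1 : ⟪ψ, ψ⟫_ℂ ≠ 0) (h3 : ⟪ψ, χ⟫_ℂ ≠ 0) :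
    ⟪ψ, ψ⟫_ℂ = ⟪ψ, χ⟫_ℂ ∧ ⟪ψ, χ⟫_ℂ = ⟪χ, ψ⟫_ℂ ∧ ⟪χ, ψ⟫_ℂ = ⟪χ, χ⟫_ℂ
      ∧ (⟪ψ, ψ⟫_ℂ).im = 0 := by
  have hne : m (ψ ⊗ₜ[ℂ] χ) ≠ 0 := fun h0 =>
    mul_ne_zero h1 h3 (by rw [← hψ.inner_mul_tmul, h0, inner_zero_right])
  obtain rfl := hfrob.eq_of_copyable_of_mul_ne_zero hψ hχ hne
  exact ⟨rfl, rfl, rfl, inner_self_im (𝕜 := ℂ) ψ⟩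

/-- If `ψ` and `χ` are copyable and the inner products `⟪ψ,ψ⟫`, `⟪χ,χ⟫`, `⟪ψ,χ⟫` are all
nonzero (i.e. cancellable), then all four inner products agree and are real. -/
theorem copyable_inner_eq (m : H ⊗[ℂ] H →ₗ[ℂ] H) (u : ℂ →ₗ[ℂ] H)
    (hfrob : IsFrobenius m u) (ψ χ : H) (hψ : Copyable m u ψ) (hχ : Copyable m u χ)
    (h1 : ⟪ψ, ψ⟫_ℂ ≠ 0) (h2 : ⟪χ, χ⟫_ℂ ≠ 0) (h3 : ⟪ψ, χ⟫_ℂ ≠ 0) :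
    ⟪ψ, ψ⟫_ℂ = ⟪ψ, χ⟫_ℂ ∧ ⟪ψ, χ⟫_ℂ = ⟪χ, ψ⟫_ℂ ∧ ⟪χ, ψ⟫_ℂ = ⟪χ, χ⟫_ℂ
      ∧ (⟪ψ, ψ⟫_ℂ).im = 0 :=
  copyable_inner_eq_general m u hfrob ψ χ hψ hχ h1 h3
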